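/- Let S = {0,1,…,9} and E = {{1,2},{1,6},{1,7},{1,8},{2,3},{2,6},{3,4},{4,5},{6,7},{7,8},{8,9}}. Let 𝒳₁ = {{s} : s ∈ S} ∪ E ∪ {{1,2,6},{1,7,8,9}} ∪ {{0,4,5,6,7,8,9}} and 𝒳₂ = {{s} : s ∈ S} ∪ E ∪ {{1,2,6},{1,7,8,9}} ∪ {{0,4,6,7,8,9}}, with rank function rkᵢ assigning 0 to singletons, 1 to elements of E, 2 to {1,2,6} and {1,7,8,9}, and 3 to the remaining cell. Then: (a) (S,𝒳₁,rk₁) and (S,𝒳₂,rk₂) are both combinatorial complexes; (b) 𝒳₁ ≠ 𝒳₂; (c) for each k ∈ {0,1,2}, the (k,k+1)-incidence relations of the two complexes coincide: the sets of k-cells and of (k+1)-cells agree for k+1 ≤ 2 and the subset relations between them are identical, and for k = 2 no 2-cell is contained in the unique 3-cell in either complex, so B_{2,3} is the zero matrix in both. Hence two distinct combinatorial complexes can share the entire sequence of incidence matrices {B_{k,k+1}}, so this sequence does not represent a combinatorial complex injectively. -/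
import Mathlib

set_option maxRecDepth 10000
set_option maxHeartbeats 1000000


/-- The edge set `E` of the running example. -/
def E10 : Finset (Finset (Fin 10)) :=
  {{1,2},{1,6},{1,7},{1,8},{2,3},{2,6},{3,4},{4,5},{6,7},{7,8},{8,9}}

/-- The 3-cell of the first complex. -/
def z1 : Finset (Fin 10) := {0,4,5,6,7,8,9}

/-- The 3-cell of the second complex. -/
def z2 : Finset (Fin 10) := {0,4,6,7,8,9}

/-- Cells of the first combinatorial complex. -/
def X1 : Finset (Finset (Fin 10)) :=
  (Finset.univ.image fun s : Fin 10 => ({s} : Finset (Fin 10))) ∪ E10 ∪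
    {{1,2,6},{1,7,8,9}} ∪ {z1}

/-- Cells of the second combinatorial complex. -/
def X2 : Finset (Finset (Fin 10)) :=
  (Finset.univ.image fun s : Fin 10 => ({s} : Finset (Fin 10))) ∪ E10 ∪
    {{1,2,6},{1,7,8,9}} ∪ {z2}

/-- The common rank function: 0 on singletons, 1 on edges, 2 on `{1,2,6}` and
`{1,7,8,9}`, and 3 on the remaining (top) cell. -/
def rk10 : Finset (Fin 10) → ℕ := fun x =>
  if x.card ≤ 1 then 0
  else if x ∈ E10 then 1
  else if x = ({1,2,6} : Finset (Fin 10)) ∨ x = ({1,7,8,9} : Finset (Fin 10)) then 2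
  else 3

/-- A combinatorial complex on `Fin 10`: all cells nonempty, every singleton a cell,
rank order-preserving on cells. -/
def IsCCF (X : Finset (Finset (Fin 10))) (rk : Finset (Fin 10) → ℕ) : Prop :=
  (∀ x ∈ X, x.Nonempty) ∧ (∀ s : Fin 10, ({s} : Finset (Fin 10)) ∈ X) ∧
    ∀ x ∈ X, ∀ y ∈ X, x ⊆ y → rk x ≤ rk y

lemma rk10_le_three (x : Finset (Fin 10)) : rk10 x ≤ 3 := by
  unfold rk10; split_ifs <;> omega

lemma rk10_zero {x : Finset (Fin 10)} (h : x.card ≤ 1) : rk10 x = 0 := by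
  unfold rk10; simp [h]

lemma E10_card : ∀ y ∈ E10, y.card = 2 :=
  Finset.filter_eq_self.mp (by decide)

lemma rk10_edge {y : Finset (Fin 10)} (h : y ∈ E10) : rk10 y = 1 := by
  have hc := E10_card y h
  unfold rk10
  rw [if_neg (by omega), if_pos h]

lemma mono_of (X : Finset (Finset (Fin 10))) (z : Finset (Fin 10))
    (hclass : ∀ y ∈ X, (y.card ≤ 1 ∨ y ∈ E10 ∨ y = ({1,2,6} : Finset (Fin 10)) ∨
      y = ({1,7,8,9} : Finset (Fin 10)) ∨ y = z))
    (hA1 : ∀ x ∈ X, x ⊆ ({1,2,6} : Finset (Fin 10)) → rk10 x ≤ 2)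
    (hA2 : ∀ x ∈ X, x ⊆ ({1,7,8,9} : Finset (Fin 10)) → rk10 x ≤ 2)
    (hz : rk10 z = 3) :
    ∀ x ∈ X, ∀ y ∈ X, x ⊆ y → rk10 x ≤ rk10 y := by
  intro x hx y hy hxy
  rcases hclass y hy with h | h | rfl | rfl | rfl
  · have : x.card ≤ 1 := le_trans (Finset.card_le_card hxy) h
    rw [rk10_zero this, rk10_zero h]
  · rw [rk10_edge h]
    by_cases hc : x.card ≤ 1
    · rw [rk10_zero hc]; omega
    · have : x = y := Finset.eq_of_subset_of_card_le hxy (by have := E10_card y h; omega)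
      rw [this, rk10_edge h]
  · have : rk10 ({1,2,6} : Finset (Fin 10)) = 2 := by decide
    rw [this]; exact hA1 x hx hxy
  · have : rk10 ({1,7,8,9} : Finset (Fin 10)) = 2 := by decide
    rw [this]; exact hA2 x hx hxy
  · rw [hz]; exact rk10_le_three x

lemma z1_mem : z1 ∈ X1 := by decide
lemma z1_not_mem : z1 ∉ X2 := by decide
lemma rk_z1 : rk10 z1 = 3 := by decide
lemma rk_z2 : rk10 z2 = 3 := by decide

lemma mem_aux (y : Finset (Fin 10)) (hy : rk10 y ≤ 2) : y ∈ X1 ↔ y ∈ X2 := by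
  unfold X1 X2
  simp only [Finset.mem_union, Finset.mem_singleton]
  constructor
  · rintro (h | rfl)
    · exact Or.inl h
    · exact absurd hy (by rw [rk_z1]; omega)
  · rintro (h | rfl)
    · exact Or.inl h
    · exact absurd hy (by rw [rk_z2]; omega)

/-- (a) both triples are combinatorial complexes; (b) their cell sets differ;
(c) for each `k ∈ {0,1,2}` the `(k,k+1)`-incidence data agree: the sets of `k`-cells
coincide for `k ≤ 2`, the incidence (subset) relations between `k`- and `(k+1)`-cells
coincide for `k ≤ 1`, and for `k = 2` no 2-cell is contained in any 3-cell in either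
complex (so `B₂,₃` is zero in both).  Hence two distinct combinatorial complexes can
share the whole sequence of incidence matrices `{B_{k,k+1}}`. -/
theorem distinct_CCs_with_same_incidence_matrices :
    IsCCF X1 rk10 ∧ IsCCF X2 rk10 ∧ X1 ≠ X2 ∧
    (∀ k : ℕ, k ≤ 2 →
      X1.filter (fun x => rk10 x = k) = X2.filter (fun x => rk10 x = k)) ∧
    (∀ k : ℕ, k ≤ 1 → ∀ x y : Finset (Fin 10),
      (x ∈ X1 ∧ rk10 x = k ∧ y ∈ X1 ∧ rk10 y = k + 1 ∧ x ⊆ y) ↔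
      (x ∈ X2 ∧ rk10 x = k ∧ y ∈ X2 ∧ rk10 y = k + 1 ∧ x ⊆ y)) ∧
    (∀ x ∈ X1, rk10 x = 2 → ∀ y ∈ X1, rk10 y = 3 → ¬ x ⊆ y) ∧
    (∀ x ∈ X2, rk10 x = 2 → ∀ y ∈ X2, rk10 y = 3 → ¬ x ⊆ y) := by
  have ccf : ∀ X : Finset (Finset (Fin 10)), ∀ z : Finset (Fin 10),
      (∀ x ∈ X, x.Nonempty) → (∀ s : Fin 10, ({s} : Finset (Fin 10)) ∈ X) →
      (∀ y ∈ X, (y.card ≤ 1 ∨ y ∈ E10 ∨ y = ({1,2,6} : Finset (Fin 10)) ∨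
        y = ({1,7,8,9} : Finset (Fin 10)) ∨ y = z)) →
      (∀ x ∈ X, x ⊆ ({1,2,6} : Finset (Fin 10)) → rk10 x ≤ 2) →
      (∀ x ∈ X, x ⊆ ({1,7,8,9} : Finset (Fin 10)) → rk10 x ≤ 2) → rk10 z = 3 →
      IsCCF X rk10 :=
    fun X z h1 h2 h3 h4 h5 h6 => ⟨h1, h2, mono_of X z h3 h4 h5 h6⟩
  refine ⟨?_, ?_, ?_, ?_, ?_, ?_, ?_⟩
  · exact ccf X1 z1 (Finset.filter_eq_self.mp (by decide)) (by decide)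
      (Finset.filter_eq_self.mp (by decide)) (Finset.filter_eq_self.mp (by decide))
      (Finset.filter_eq_self.mp (by decide)) rk_z1
  · exact ccf X2 z2 (Finset.filter_eq_self.mp (by decide)) (by decide)
      (Finset.filter_eq_self.mp (by decide)) (Finset.filter_eq_self.mp (by decide))
      (Finset.filter_eq_self.mp (by decide)) rk_z2
  · intro h
    exact z1_not_mem (h ▸ z1_mem)
  · intro k hk
    interval_cases k <;> decide
  · intro k hk x y
    have hx : rk10 x = k → (x ∈ X1 ↔ x ∈ X2) := fun h => mem_aux x (by omega)
    have hy : rk10 y = k + 1 → (y ∈ X1 ↔ y ∈ X2) := fun h => mem_aux y (by omega)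
    constructor
    · rintro ⟨h1, h2, h3, h4, h5⟩
      exact ⟨(hx h2).1 h1, h2, (hy h4).1 h3, h4, h5⟩
    · rintro ⟨h1, h2, h3, h4, h5⟩
      exact ⟨(hx h2).2 h1, h2, (hy h4).2 h3, h4, h5⟩
  · have h2 : ∀ x ∈ X1, rk10 x = 2 → (x = ({1,2,6} : Finset (Fin 10)) ∨
        x = ({1,7,8,9} : Finset (Fin 10))) := Finset.filter_eq_self.mp (by decide)
    have h3 : ∀ y ∈ X1, rk10 y = 3 → y = z1 := Finset.filter_eq_self.mp (by decide)
    intro x hx hx2 y hy hy3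
    rcases h2 x hx hx2 with rfl | rfl <;> rw [h3 y hy hy3] <;> decide
  · have h2 : ∀ x ∈ X2, rk10 x = 2 → (x = ({1,2,6} : Finset (Fin 10)) ∨
        x = ({1,7,8,9} : Finset (Fin 10))) := Finset.filter_eq_self.mp (by decide)
    have h3 : ∀ y ∈ X2, rk10 y = 3 → y = z2 := Finset.filter_eq_self.mp (by decide)
    intro x hx hx2 y hy hy3
    rcases h2 x hx hx2 with rfl | rfl <;> rw [h3 y hy hy3] <;> decide
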